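/- arXiv:1612.01459 — 2 statements merged into one kernel-verified Lean document; each statement's English description precedes it below -/
import Mathlib

section
/- Let g_M(ℓ) be the scaled discrete convolution of two triangular functions, g_M(ℓ) = (1/M)·Σ_{k = max(ℓ−M, −M)}^{min(ℓ+M, M)} (1 − |k/M|)(1 − |(ℓ−k)/M|). Then g_M attains its maximum at ℓ = 0, i.e., g_M(ℓ) ≤ g_M(0) for all ℓ ∈ {−2M, …, 2M}. -/
/-- g_M(ℓ), the discrete convolution of two triangular functions scaled by 1/M. -/
noncomputable def gM (M : ℕ) (ℓ : ℤ) : ℝ :=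
  (1 / (M : ℝ)) *
    ∑ k ∈ Finset.Icc (max (ℓ - (M : ℤ)) (-(M : ℤ))) (min (ℓ + (M : ℤ)) (M : ℤ)),
      (1 - |(k : ℝ) / (M : ℝ)|) * (1 - |((ℓ : ℝ) - (k : ℝ)) / (M : ℝ)|)

/-- g_M attains its maximum at ℓ = 0: g_M(ℓ) ≤ g_M(0) for all ℓ ∈ {−2M, …, 2M}. -/
theorem gM_le_gM_zero (M : ℕ) (hM : 1 ≤ M) (ℓ : ℤ)
    (hℓ : ℓ ∈ Finset.Icc (-(2 * M : ℤ)) (2 * M : ℤ)) :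
    gM M ℓ ≤ gM M 0 := by
  have key : ∀ a : ℤ,
      ∑ k ∈ Finset.Icc (max (a - (M : ℤ)) (-(M : ℤ))) (min (a + (M : ℤ)) (M : ℤ)),
        (1 - |(k : ℝ) / (M : ℝ)|) * (1 - |((a : ℝ) - (k : ℝ)) / (M : ℝ)|)
      ≤ ∑ k ∈ Finset.Icc (-(M : ℤ)) (M : ℤ),
        (1 - |(k : ℝ) / (M : ℝ)|) * (1 - |(k : ℝ) / (M : ℝ)|) := by
    intro a
    set S := Finset.Icc (max (a - (M : ℤ)) (-(M : ℤ))) (min (a + (M : ℤ)) (M : ℤ)) with hS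
    have step1 : ∑ k ∈ S, (1 - |(k : ℝ) / (M : ℝ)|) * (1 - |((a : ℝ) - (k : ℝ)) / (M : ℝ)|)
        ≤ ∑ k ∈ S, ((1 - |(k : ℝ) / (M : ℝ)|) * (1 - |(k : ℝ) / (M : ℝ)|)
            + (1 - |((a : ℝ) - (k : ℝ)) / (M : ℝ)|) * (1 - |((a : ℝ) - (k : ℝ)) / (M : ℝ)|)) / 2 := by
      apply Finset.sum_le_sum
      intro k hk
      nlinarith [sq_nonneg ((1 - |(k : ℝ) / (M : ℝ)|) - (1 - |((a : ℝ) - (k : ℝ)) / (M : ℝ)|))]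
    have step2 : ∑ k ∈ S, (1 - |((a : ℝ) - (k : ℝ)) / (M : ℝ)|) * (1 - |((a : ℝ) - (k : ℝ)) / (M : ℝ)|)
        = ∑ k ∈ S, (1 - |(k : ℝ) / (M : ℝ)|) * (1 - |(k : ℝ) / (M : ℝ)|) := by
      apply Finset.sum_nbij' (fun k => a - k) (fun k => a - k)
      · intro k hk
        simp only [hS, Finset.mem_Icc, max_le_iff, le_min_iff] at *
        omega
      · intro k hk
        simp only [hS, Finset.mem_Icc, max_le_iff, le_min_iff] at *
        omega
      · intro k _; omega
      · intro k _; omega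
      · intro k _
        push_cast
        ring_nf
    have step3 : ∑ k ∈ S, (1 - |(k : ℝ) / (M : ℝ)|) * (1 - |(k : ℝ) / (M : ℝ)|)
        ≤ ∑ k ∈ Finset.Icc (-(M : ℤ)) (M : ℤ),
          (1 - |(k : ℝ) / (M : ℝ)|) * (1 - |(k : ℝ) / (M : ℝ)|) := by
      apply Finset.sum_le_sum_of_subset_of_nonneg
      · intro k hk
        simp only [hS, Finset.mem_Icc, max_le_iff, le_min_iff] at *
        omega
      · intro k _ _
        exact mul_self_nonneg _
    have step1' : ∑ k ∈ S, ((1 - |(k : ℝ) / (M : ℝ)|) * (1 - |(k : ℝ) / (M : ℝ)|)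
            + (1 - |((a : ℝ) - (k : ℝ)) / (M : ℝ)|) * (1 - |((a : ℝ) - (k : ℝ)) / (M : ℝ)|)) / 2
        = (∑ k ∈ S, (1 - |(k : ℝ) / (M : ℝ)|) * (1 - |(k : ℝ) / (M : ℝ)|)
          + ∑ k ∈ S, (1 - |((a : ℝ) - (k : ℝ)) / (M : ℝ)|) * (1 - |((a : ℝ) - (k : ℝ)) / (M : ℝ)|)) / 2 := by
      rw [← Finset.sum_add_distrib, Finset.sum_div]
    linarith
  have h0 : gM M 0 = ∑ k ∈ Finset.Icc (-(M : ℤ)) (M : ℤ),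
      (1 / (M : ℝ)) • ((1 - |(k : ℝ) / (M : ℝ)|) * (1 - |(k : ℝ) / (M : ℝ)|)) := by
    rw [← Finset.smul_sum]
    unfold gM
    simp [zero_sub, zero_add, neg_div, abs_neg, smul_eq_mul]
  rw [h0, ← Finset.smul_sum]
  unfold gM
  simp only [smul_eq_mul]
  have hM0 : (0:ℝ) ≤ 1 / (M : ℝ) := by positivity
  exact mul_le_mul_of_nonneg_left (key ℓ) hM0
end

section
/- Let B : (0, 1/2] → ℝ be nonnegative, decreasing, and convex. Then for any Ω > 0 and any f with 0 < f < Ω and Ω + f ≤ 1/2, the function f ↦ B(Ω − f) + B(Ω + f) is nondecreasing in f on this range. -/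
/-- If B : (0, 1/2] → ℝ is nonnegative, decreasing and convex, then for Ω > 0 the
map f ↦ B(Ω − f) + B(Ω + f) is nondecreasing on {f : 0 < f < Ω, Ω + f ≤ 1/2}. -/
theorem symmetrized_monotone (B : ℝ → ℝ)
    (hB0 : ∀ x ∈ Set.Ioc (0 : ℝ) (1 / 2), 0 ≤ B x)
    (hanti : AntitoneOn B (Set.Ioc (0 : ℝ) (1 / 2)))
    (hconv : ConvexOn ℝ (Set.Ioc (0 : ℝ) (1 / 2)) B)
    (Ω : ℝ) (hΩ : 0 < Ω) :
    ∀ f₁ f₂ : ℝ, 0 < f₁ → f₁ ≤ f₂ → f₂ < Ω → Ω + f₂ ≤ 1 / 2 →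
      B (Ω - f₁) + B (Ω + f₁) ≤ B (Ω - f₂) + B (Ω + f₂) := by
  intro f₁ f₂ hf₁ h12 h2Ω hsum
  rcases eq_or_lt_of_le h12 with rfl | hlt
  · exact le_rfl
  · have ha : Ω - f₂ ∈ Set.Ioc (0 : ℝ) (1 / 2) := ⟨by linarith, by linarith⟩
    have hb : Ω - f₁ ∈ Set.Ioc (0 : ℝ) (1 / 2) := ⟨by linarith, by linarith⟩
    have hc : Ω + f₁ ∈ Set.Ioc (0 : ℝ) (1 / 2) := ⟨by linarith, by linarith⟩
    have hd : Ω + f₂ ∈ Set.Ioc (0 : ℝ) (1 / 2) := ⟨by linarith, hsum⟩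
    have s1 := hconv.slope_mono_adjacent ha hc
      (show Ω - f₂ < Ω - f₁ by linarith) (show Ω - f₁ < Ω + f₁ by linarith)
    have s2 := hconv.slope_mono_adjacent hb hd
      (show Ω - f₁ < Ω + f₁ by linarith) (show Ω + f₁ < Ω + f₂ by linarith)
    have e1 : Ω - f₁ - (Ω - f₂) = f₂ - f₁ := by ring
    have e2 : Ω + f₂ - (Ω + f₁) = f₂ - f₁ := by ring
    rw [e1] at s1
    rw [e2] at s2
    have hpos : (0:ℝ) < f₂ - f₁ := by linarith
    have key : (B (Ω - f₁) - B (Ω - f₂)) / (f₂ - f₁) ≤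
        (B (Ω + f₂) - B (Ω + f₁)) / (f₂ - f₁) := s1.trans s2
    have := (div_le_div_iff_of_pos_right hpos).mp key
    linarith
end
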